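/- (Abstract Caccioppoli identity) Let H, H₀, L be vector spaces with linear maps ∂ : H → L, η : L → L restricting to η : H → H₀, and D : H → L (playing the role of the commutator 'multiplication by ∇η'), satisfying: (i) commutativity D(η(u)) = η(D(u)) for all u, and (ii) the Leibniz rule ∂(η(v)) = D(v) + η(∂(v)) for all v ∈ H. Let b : L × L → ℂ be a Hermitian sesquilinear form with b(u, η v) = b(η u, v) for all u, v ∈ L. Then for all u, v ∈ H: b(∂(ηu), ∂(ηv)) = b(D u, D v) + (1/2)( b(∂u, ∂(η²v)) + conj( b(∂v, ∂(η²u)) ) ). -/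
import Mathlib


/-- Abstract Caccioppoli identity (Proposition 5.1): given an `η`-derivation triple
`(∂, η, D)` — with `∂ : H → L`, `η` acting on `H` (factoring through `H₀`) and on `L`,
and `D : H → L` (the commutator "multiplication by `∇η`") satisfying commutativity
`D ∘ η = η ∘ D` and the Leibniz rule `∂(ηv) = Dv + η(∂v)` — and a Hermitian
sesquilinear form `b` on `L` with `b(u, ηv) = b(ηu, v)`, one has for all `u, v ∈ H`:
`b(∂(ηu), ∂(ηv)) = b(Du, Dv) + ½( b(∂u, ∂(η²v)) + conj b(∂v, ∂(η²u)) )`. -/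
theorem abstract_caccioppoli_identity
    {H H₀ L : Type*} [AddCommGroup H] [Module ℂ H] [AddCommGroup H₀] [Module ℂ H₀]
    [AddCommGroup L] [Module ℂ L]
    (par : H →ₗ[ℂ] L) (ηH : H →ₗ[ℂ] H) (ηL : L →ₗ[ℂ] L) (D : H →ₗ[ℂ] L)
    (hfactor : ∃ (η₀ : H →ₗ[ℂ] H₀) (ι : H₀ →ₗ[ℂ] H), ηH = ι.comp η₀)
    (hcomm : ∀ u : H, D (ηH u) = ηL (D u))
    (hleibniz : ∀ v : H, par (ηH v) = D v + ηL (par v))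
    (b : L → L → ℂ)
    (haddl : ∀ x y z : L, b (x + y) z = b x z + b y z)
    (haddr : ∀ x y z : L, b x (y + z) = b x y + b x z)
    (hherm : ∀ x y : L, b x y = starRingEnd ℂ (b y x))
    (hbη : ∀ x y : L, b x (ηL y) = b (ηL x) y)
    (u v : H) :
    b (par (ηH u)) (par (ηH v)) =
      b (D u) (D v) + (1 / 2 : ℂ) *
        (b (par u) (par (ηH (ηH v))) + starRingEnd ℂ (b (par v) (par (ηH (ηH u))))) := by
  have e2 : ∀ w : H, par (ηH (ηH w)) = ηL (D w) + (ηL (D w) + ηL (ηL (par w))) := by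
    intro w
    rw [hleibniz, hcomm, hleibniz, map_add]
  simp only [hleibniz, hcomm, e2, haddl, haddr, map_add, ← hherm, hbη]
  ring
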